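/- Let x_1, …, x_n ∈ ℝ^{2n} be linearly independent vectors spanning a Lagrangian subspace, i.e. x_iᵀ J x_j = 0 for all i, j, and let X_L^⊥ ∈ ℝ^{2n×(n+1)} be a matrix whose columns form an orthonormal basis of span{x_1, …, x_{n-1}}^⊥. Then a matrix H ∈ ℝ^{2n×2n} is skew-Hamiltonian with H x_k = x_{k+1} for all k = 1, …, n-1 if and only if H = Ĥ + Jᵀ X_L^⊥ S (X_L^⊥)ᵀ for some skew-symmetric matrix S ∈ ℝ^{(n+1)×(n+1)}. -/

import Mathlib

open Matrix

noncomputable section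

/-- The canonical skew-symmetric matrix `J = [[0, I],[-I, 0]]`. -/
def Jmat (n : ℕ) : Matrix (Fin n ⊕ Fin n) (Fin n ⊕ Fin n) ℝ :=
  Matrix.fromBlocks 0 1 (-1) 0

/-- A matrix `H` is skew-Hamiltonian if `Jᵀ Hᵀ J = H`. -/
def IsSkewHamiltonian {n : ℕ} (H : Matrix (Fin n ⊕ Fin n) (Fin n ⊕ Fin n) ℝ) : Prop :=
  (Jmat n)ᵀ * Hᵀ * Jmat n = H

/-- `X_L = [x_1 ⋯ x_{n-1}]`. -/
def XL {n : ℕ} (x : Fin n → (Fin n ⊕ Fin n) → ℝ) :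
    Matrix (Fin n ⊕ Fin n) (Fin (n - 1)) ℝ :=
  Matrix.of fun i j => x ⟨j.1, lt_of_lt_of_le j.2 (Nat.sub_le n 1)⟩ i

/-- `X_R = [x_2 ⋯ x_n]`. -/
def XR {n : ℕ} (x : Fin n → (Fin n ⊕ Fin n) → ℝ) :
    Matrix (Fin n ⊕ Fin n) (Fin (n - 1)) ℝ :=
  Matrix.of fun i j => x ⟨j.1 + 1, by have := j.2; omega⟩ i

/-- The Moore–Penrose pseudoinverse `X_L⁺ = (X_Lᵀ X_L)⁻¹ X_Lᵀ` of `X_L`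
(for `X_L` with linearly independent columns). -/
def XLpinv {n : ℕ} (x : Fin n → (Fin n ⊕ Fin n) → ℝ) :
    Matrix (Fin (n - 1)) (Fin n ⊕ Fin n) ℝ :=
  ((XL x)ᵀ * XL x)⁻¹ * (XL x)ᵀ

/-- `Ĥ = X_R X_L⁺ + Jᵀ (X_R X_L⁺)ᵀ J`. -/
def Hhat {n : ℕ} (x : Fin n → (Fin n ⊕ Fin n) → ℝ) :
    Matrix (Fin n ⊕ Fin n) (Fin n ⊕ Fin n) ℝ :=
  XR x * XLpinv x + (Jmat n)ᵀ * (XR x * XLpinv x)ᵀ * Jmat n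

/-- `H` realizes the Krylov relations `H x_k = x_{k+1}`, `k = 1, …, n-1`. -/
def KrylovRel {n : ℕ} (H : Matrix (Fin n ⊕ Fin n) (Fin n ⊕ Fin n) ℝ)
    (x : Fin n → (Fin n ⊕ Fin n) → ℝ) : Prop :=
  ∀ k : Fin (n - 1), H *ᵥ x ⟨k.1, lt_of_lt_of_le k.2 (Nat.sub_le n 1)⟩
    = x ⟨k.1 + 1, by have := k.2; omega⟩

/-! ### Auxiliary lemmas -/

namespace MemHKAux

lemma Jmat_transpose (n : ℕ) : (Jmat n)ᵀ = -(Jmat n) := by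
  simp only [Jmat, fromBlocks_transpose, transpose_zero, transpose_one, transpose_neg,
    fromBlocks_neg, neg_neg, neg_zero]

lemma Jmat_mul_Jmat (n : ℕ) : Jmat n * Jmat n = -1 := by
  simp only [Jmat, fromBlocks_multiply]
  simp [← fromBlocks_one, fromBlocks_neg]

lemma Jmat_tr_mul (n : ℕ) : (Jmat n)ᵀ * Jmat n = 1 := by
  rw [Jmat_transpose, neg_mul, Jmat_mul_Jmat, neg_neg]

lemma Jmat_mul_tr (n : ℕ) : Jmat n * (Jmat n)ᵀ = 1 := by
  rw [Jmat_transpose, mul_neg, Jmat_mul_Jmat, neg_neg]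

lemma ext_mulVec {m k : Type*} [Fintype k] [DecidableEq k] {A B : Matrix m k ℝ}
    (h : ∀ v, A *ᵥ v = B *ᵥ v) : A = B := by
  ext i j
  simpa using congrFun (h (Pi.single j 1)) i

variable {n : ℕ} {x : Fin n → (Fin n ⊕ Fin n) → ℝ}

lemma gram_isUnit (hLI : LinearIndependent ℝ x) : IsUnit ((XL x)ᵀ * XL x) := by
  rw [← Matrix.mulVec_injective_iff_isUnit]
  have hcols : LinearIndependent ℝ (fun j : Fin (n-1) =>
      x ⟨j.1, lt_of_lt_of_le j.2 (Nat.sub_le n 1)⟩) := by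
    apply hLI.comp
    intro a b hab
    simpa [Fin.ext_iff] using congrArg Fin.val hab
  rw [Fintype.linearIndependent_iff] at hcols
  intro v w hvw
  have h0 : ((XL x)ᵀ * XL x) *ᵥ (v - w) = 0 := by
    rw [Matrix.mulVec_sub, hvw, sub_self]
  have h1 : XL x *ᵥ (v - w) = 0 := by
    have := congrArg (fun z => (v - w) ⬝ᵥ z) h0
    simp only [dotProduct_zero] at this
    rw [← Matrix.mulVec_mulVec, dotProduct_mulVec, ← Matrix.mulVec_transpose,
      transpose_transpose, dotProduct_self_eq_zero] at this
    exact this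
  have hsum : ∑ j : Fin (n-1), (v - w) j • x ⟨j.1, lt_of_lt_of_le j.2 (Nat.sub_le n 1)⟩ = 0 := by
    funext i
    have := congrFun h1 i
    simpa [Matrix.mulVec, dotProduct, XL, mul_comm, Finset.sum_apply] using this
  have h2 := hcols _ hsum
  funext j
  simpa [sub_eq_zero] using h2 j

lemma gram_det_isUnit (hLI : LinearIndependent ℝ x) : IsUnit ((XL x)ᵀ * XL x).det :=
  (Matrix.isUnit_iff_isUnit_det _).mp (gram_isUnit hLI)

lemma pinv_mul (hLI : LinearIndependent ℝ x) : XLpinv x * XL x = 1 := by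
  rw [XLpinv, Matrix.mul_assoc]
  exact Matrix.nonsing_inv_mul _ (gram_det_isUnit hLI)

lemma lag_matrix (hLag : ∀ i j : Fin n, x i ⬝ᵥ (Jmat n *ᵥ x j) = 0) :
    (XR x)ᵀ * (Jmat n * XL x) = 0 := by
  ext j k
  have := hLag ⟨j.1 + 1, by have := j.2; omega⟩ ⟨k.1, lt_of_lt_of_le k.2 (Nat.sub_le n 1)⟩
  simpa [Matrix.mul_apply, Matrix.mulVec, dotProduct, XR, XL, Finset.mul_sum] using this

lemma krylov_iff {H : Matrix (Fin n ⊕ Fin n) (Fin n ⊕ Fin n) ℝ} :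
    KrylovRel H x ↔ H * XL x = XR x := by
  constructor
  · intro h
    ext i k
    have := congrFun (h k) i
    simpa [Matrix.mul_apply, Matrix.mulVec, dotProduct, XL, XR] using this
  · intro h k
    funext i
    have := congrFun (congrFun h i) k
    simpa [Matrix.mul_apply, Matrix.mulVec, dotProduct, XL, XR] using this

lemma Hhat_mul_XL (hLI : LinearIndependent ℝ x)
    (hLag : ∀ i j : Fin n, x i ⬝ᵥ (Jmat n *ᵥ x j) = 0) :
    Hhat x * XL x = XR x := by
  have h1 : (XR x * XLpinv x) * XL x = XR x := by
    rw [Matrix.mul_assoc, pinv_mul hLI, Matrix.mul_one]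
  have h2 : (XR x * XLpinv x)ᵀ * (Jmat n * XL x) = 0 := by
    rw [Matrix.transpose_mul, Matrix.mul_assoc, lag_matrix hLag, Matrix.mul_zero]
  rw [Hhat, Matrix.add_mul, h1, Matrix.mul_assoc ((Jmat n)ᵀ * (XR x * XLpinv x)ᵀ),
    Matrix.mul_assoc ((Jmat n)ᵀ), h2]
  simp

lemma Hhat_conj : (Jmat n)ᵀ * (Hhat x)ᵀ * Jmat n = Hhat x := by
  have key : ∀ A : Matrix (Fin n ⊕ Fin n) (Fin n ⊕ Fin n) ℝ,
      (Jmat n)ᵀ * ((Jmat n)ᵀ * Aᵀ * Jmat n)ᵀ * Jmat n = A := by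
    intro A
    have h1 : ((Jmat n)ᵀ * Aᵀ * Jmat n)ᵀ = (Jmat n)ᵀ * (A * Jmat n) := by
      rw [Matrix.transpose_mul, Matrix.transpose_mul, transpose_transpose, transpose_transpose]
    rw [h1, Jmat_transpose]
    simp only [Matrix.neg_mul, Matrix.mul_neg, neg_neg]
    simp only [← Matrix.mul_assoc]
    rw [Matrix.mul_assoc (Jmat n * Jmat n * A), Jmat_mul_Jmat]
    simp
  rw [Hhat, Matrix.transpose_add, Matrix.mul_add, Matrix.add_mul, key]
  exact add_comm _ _

lemma conj_skew {M : Matrix (Fin n ⊕ Fin n) (Fin n ⊕ Fin n) ℝ} (hM : Mᵀ = -M) :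
    (Jmat n)ᵀ * ((Jmat n)ᵀ * M)ᵀ * Jmat n = (Jmat n)ᵀ * M := by
  rw [Matrix.transpose_mul, transpose_transpose, hM, Jmat_transpose]
  simp only [Matrix.neg_mul, Matrix.mul_neg, neg_neg, neg_inj]
  simp only [Matrix.mul_assoc]
  rw [Jmat_mul_Jmat]
  simp

end MemHKAux

open MemHKAux in
/-- Characterization of all skew-Hamiltonian matrices realizing the Krylov relations:
`H` is skew-Hamiltonian with `H x_k = x_{k+1}` (`k = 1, …, n-1`) iff
`H = Ĥ + Jᵀ X_L^⊥ S (X_L^⊥)ᵀ` for some skew-symmetric `S ∈ ℝ^{(n+1)×(n+1)}`,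
where the columns of `X_L^⊥` are an orthonormal basis of `span{x_1,…,x_{n-1}}^⊥`. -/
theorem mem_HK_iff {n : ℕ} (x : Fin n → (Fin n ⊕ Fin n) → ℝ)
    (hLI : LinearIndependent ℝ x)
    (hLag : ∀ i j : Fin n, x i ⬝ᵥ (Jmat n *ᵥ x j) = 0)
    (XLperp : Matrix (Fin n ⊕ Fin n) (Fin (n + 1)) ℝ)
    (hON : XLperpᵀ * XLperp = 1)
    (hperp : ∀ v : (Fin n ⊕ Fin n) → ℝ,
      (∃ w : Fin (n + 1) → ℝ, XLperp *ᵥ w = v) ↔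
      ∀ k : Fin (n - 1), v ⬝ᵥ x ⟨k.1, lt_of_lt_of_le k.2 (Nat.sub_le n 1)⟩ = 0)
    (H : Matrix (Fin n ⊕ Fin n) (Fin n ⊕ Fin n) ℝ) :
    (IsSkewHamiltonian H ∧ KrylovRel H x) ↔
    ∃ S : Matrix (Fin (n + 1)) (Fin (n + 1)) ℝ, Sᵀ = -S ∧
      H = Hhat x + (Jmat n)ᵀ * (XLperp * S * XLperpᵀ) := by
  -- columns of XLperp are orthogonal to the columns of XL
  have hQL : XLperpᵀ * XL x = 0 := by
    ext j k
    have hw : ∃ w : Fin (n + 1) → ℝ, XLperp *ᵥ w = fun i => XLperp i j :=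
      ⟨Pi.single j 1, by simp; rfl⟩
    have := (hperp (fun i => XLperp i j)).mp hw k
    simpa [Matrix.mul_apply, dotProduct, XL] using this
  have hLP : (XL x)ᵀ * (1 - XL x * XLpinv x) = 0 := by
    rw [Matrix.mul_sub, Matrix.mul_one, XLpinv, ← Matrix.mul_assoc, ← Matrix.mul_assoc,
      Matrix.mul_nonsing_inv _ (gram_det_isUnit hLI), Matrix.one_mul, sub_self]
  -- XLperp XLperpᵀ is the projection onto the orthogonal complement
  have hQQ : XLperp * XLperpᵀ = 1 - XL x * XLpinv x := by
    apply ext_mulVec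
    intro v
    have hwperp : ∀ k : Fin (n - 1),
        ((1 - XL x * XLpinv x) *ᵥ v) ⬝ᵥ x ⟨k.1, lt_of_lt_of_le k.2 (Nat.sub_le n 1)⟩ = 0 := by
      intro k
      have h0 : (XL x)ᵀ *ᵥ ((1 - XL x * XLpinv x) *ᵥ v) = 0 := by
        rw [Matrix.mulVec_mulVec, hLP, Matrix.zero_mulVec]
      have := congrFun h0 k
      simpa [Matrix.mulVec, dotProduct, XL, mul_comm] using this
    obtain ⟨u, hu⟩ := (hperp _).mpr hwperp
    have hQP : XLperpᵀ * (XL x * XLpinv x) = 0 := by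
      rw [← Matrix.mul_assoc, hQL, Matrix.zero_mul]
    have hv : v = (XL x * XLpinv x) *ᵥ v + (1 - XL x * XLpinv x) *ᵥ v := by
      rw [Matrix.sub_mulVec, Matrix.one_mulVec]; abel
    calc (XLperp * XLperpᵀ) *ᵥ v = XLperp *ᵥ (XLperpᵀ *ᵥ v) := by rw [Matrix.mulVec_mulVec]
      _ = XLperp *ᵥ (XLperpᵀ *ᵥ ((XL x * XLpinv x) *ᵥ v)
            + XLperpᵀ *ᵥ ((1 - XL x * XLpinv x) *ᵥ v)) := by
          rw [← Matrix.mulVec_add, ← hv]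
      _ = XLperp *ᵥ u := by
          rw [Matrix.mulVec_mulVec, hQP, Matrix.zero_mulVec, ← hu,
            Matrix.mulVec_mulVec, hON, Matrix.one_mulVec, zero_add]
      _ = (1 - XL x * XLpinv x) *ᵥ v := hu
  constructor
  · rintro ⟨hSH, hKr⟩
    have hSH' : (Jmat n)ᵀ * Hᵀ * Jmat n = H := hSH
    set D := H - Hhat x with hD
    have hDL : D * XL x = 0 := by
      rw [hD, Matrix.sub_mul, krylov_iff.mp hKr, Hhat_mul_XL hLI hLag, sub_self]
    have hDskew : (Jmat n)ᵀ * Dᵀ * Jmat n = D := by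
      rw [hD, Matrix.transpose_sub, Matrix.mul_sub, Matrix.sub_mul, hSH', Hhat_conj]
    have hc : Jmat n * D = Dᵀ * Jmat n := by
      conv_lhs => rw [← hDskew]
      rw [← Matrix.mul_assoc, ← Matrix.mul_assoc, Jmat_mul_tr n, Matrix.one_mul]
    have hLJD : (XL x)ᵀ * (Jmat n * D) = 0 := by
      rw [hc, ← Matrix.mul_assoc, ← Matrix.transpose_mul, hDL, Matrix.transpose_zero,
        Matrix.zero_mul]
    have hPJD : (XL x * XLpinv x) * (Jmat n * D) = 0 := by
      rw [Matrix.mul_assoc, XLpinv, Matrix.mul_assoc, hLJD, Matrix.mul_zero, Matrix.mul_zero]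
    have h1 : D * (1 - XL x * XLpinv x) = D := by
      rw [Matrix.mul_sub, Matrix.mul_one, ← Matrix.mul_assoc, hDL, Matrix.zero_mul, sub_zero]
    have h2 : (1 - XL x * XLpinv x) * (Jmat n * D) = Jmat n * D := by
      rw [Matrix.sub_mul, Matrix.one_mul, hPJD, sub_zero]
    have hJD : (Jmat n * D)ᵀ = -(Jmat n * D) := by
      rw [Matrix.transpose_mul, Jmat_transpose, Matrix.mul_neg, ← hc]
    have hSskew : (XLperpᵀ * (Jmat n * D) * XLperp)ᵀ = -(XLperpᵀ * (Jmat n * D) * XLperp) := by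
      rw [Matrix.transpose_mul, Matrix.transpose_mul, transpose_transpose, hJD]
      simp [Matrix.mul_assoc]
    refine ⟨XLperpᵀ * (Jmat n * D) * XLperp, hSskew, ?_⟩
    have key : (Jmat n)ᵀ * (XLperp * (XLperpᵀ * (Jmat n * D) * XLperp) * XLperpᵀ) = D := by
      calc (Jmat n)ᵀ * (XLperp * (XLperpᵀ * (Jmat n * D) * XLperp) * XLperpᵀ)
          = (Jmat n)ᵀ * ((XLperp * XLperpᵀ) * ((Jmat n * D) * (XLperp * XLperpᵀ))) := by
            simp only [Matrix.mul_assoc]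
        _ = (Jmat n)ᵀ * ((1 - XL x * XLpinv x) * ((Jmat n * D) * (1 - XL x * XLpinv x))) := by
            rw [hQQ]
        _ = (Jmat n)ᵀ * ((1 - XL x * XLpinv x) * (Jmat n * (D * (1 - XL x * XLpinv x)))) := by
            rw [Matrix.mul_assoc]
        _ = (Jmat n)ᵀ * ((1 - XL x * XLpinv x) * (Jmat n * D)) := by rw [h1]
        _ = (Jmat n)ᵀ * (Jmat n * D) := by rw [h2]
        _ = D := by rw [← Matrix.mul_assoc, Jmat_tr_mul, Matrix.one_mul]
    rw [key, hD]
    abel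
  · rintro ⟨S, hS, rfl⟩
    constructor
    · have hM : (XLperp * S * XLperpᵀ)ᵀ = -(XLperp * S * XLperpᵀ) := by
        rw [Matrix.transpose_mul, Matrix.transpose_mul, transpose_transpose, hS]
        simp [Matrix.mul_assoc]
      show (Jmat n)ᵀ * (Hhat x + (Jmat n)ᵀ * (XLperp * S * XLperpᵀ))ᵀ * Jmat n = _
      rw [Matrix.transpose_add, Matrix.mul_add, Matrix.add_mul, Hhat_conj, conj_skew hM]
    · apply krylov_iff.mpr
      rw [Matrix.add_mul, Hhat_mul_XL hLI hLag, Matrix.mul_assoc, Matrix.mul_assoc,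
        Matrix.mul_assoc, hQL]
      simp
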